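/- For all integers n, m, l, j ≥ 0, β_{n,m+l}^{↑j} · β_{j,m} = β_{j+n,m} · β_{n,l}^{↑(m+j)} in B_∞. -/

import Mathlib

/-!
Splitting the `m + l` strands of the second block gives `β_{n,m+l} = β_{n,m} · β_{n,l}^{↑m}`, and
splitting off the last `j` rows of the product defining `β_{j+n,m}` gives
`β_{j+n,m} = β_{n,m}^{↑j} · β_{j,m}`. The identity then reduces to the fact that `β_{j,m}`, a word in
`σ_1, …, σ_{j+m-1}`, commutes with everything in the image of `↑(m+j)`.
-/

namespace BraidPaper

/-- Relations of the infinite Artin braid group `B_∞`.  The generator with index `n : ℕ`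
represents the Artin generator `σ_{n+1}` (so generators are `σ_1, σ_2, …`). -/
def BraidRels : Set (FreeGroup ℕ) :=
  {r | (∃ i : ℕ, r = .of i * .of (i + 1) * .of i * (.of (i + 1) * .of i * .of (i + 1))⁻¹) ∨
       (∃ i j : ℕ, i + 2 ≤ j ∧ r = .of i * .of j * (.of j * .of i)⁻¹)}

/-- The infinite Artin braid group `B_∞`, presented by generators `σ_1, σ_2, …` and the
braid and far-commutativity relations. -/
abbrev BInf : Type := PresentedGroup BraidRels

/-- The Artin generator `σ i` of `B_∞` (meaningful for `i ≥ 1`). -/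
def σ (i : ℕ) : BInf := PresentedGroup.of (i - 1)

lemma rel_eq_one {r : FreeGroup ℕ} (hr : r ∈ BraidRels) : PresentedGroup.mk BraidRels r = 1 := by
  have : r ∈ Subgroup.normalClosure BraidRels := Subgroup.subset_normalClosure hr
  exact (QuotientGroup.eq_one_iff r).mpr this

lemma gen_braid (i : ℕ) :
    (PresentedGroup.of i : BInf) * .of (i + 1) * .of i = .of (i + 1) * .of i * .of (i + 1) := by
  have h := rel_eq_one (Or.inl ⟨i, rfl⟩)
  rw [map_mul, map_mul, map_mul, map_inv, map_mul, map_mul, mul_inv_eq_one] at h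
  exact h

lemma gen_comm {i j : ℕ} (hij : i + 2 ≤ j) :
    (PresentedGroup.of i : BInf) * .of j = .of j * .of i := by
  have h := rel_eq_one (Or.inr ⟨i, j, hij, rfl⟩)
  rw [map_mul, map_mul, map_inv, map_mul, mul_inv_eq_one] at h
  exact h

/-- The shift endomorphism `↑ℓ : B_∞ → B_∞`, `σ_i ↦ σ_{i+ℓ}`. -/
def shift (l : ℕ) : BInf →* BInf :=
  PresentedGroup.toGroup (f := fun n => (PresentedGroup.of (n + l) : BInf)) (by
    rintro r (⟨i, rfl⟩ | ⟨i, j, hij, rfl⟩) <;>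
      simp only [map_mul, map_inv, FreeGroup.lift_apply_of, mul_inv_eq_one]
    · have h1 : i + 1 + l = i + l + 1 := by omega
      rw [h1]; exact gen_braid (i + l)
    · exact gen_comm (by omega : (i + l) + 2 ≤ j + l))

/-- The ascending product `σ_i σ_{i+1} ⋯ σ_{i+l-1}` (of `l` factors). -/
def asc (i l : ℕ) : BInf := ((List.range l).map fun t => σ (i + t)).prod

/-- The descending product `σ_i σ_{i-1} ⋯ σ_{i-k+1}` (of `k` factors). -/
def desc (i k : ℕ) : BInf := ((List.range k).map fun t => σ (i - t)).prod

/-- The block transposition braid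
`β_{k,l} = (σ_k σ_{k+1} ⋯ σ_{k+l-1})(σ_{k-1} σ_k ⋯ σ_{k+l-2}) ⋯ (σ_1 σ_2 ⋯ σ_l)`,
with `β_{k,0} = β_{0,l} = 1`. -/
def β (k l : ℕ) : BInf := ((List.range k).map fun r => asc (k - r) l).prod

/-- The positive (Garside) lift `ω_a = β_{1,1} β_{2,1} ⋯ β_{a-1,1}` of the longest element of
the symmetric group `S_a`, with `ω_0 = ω_1 = 1`. -/
def ω (a : ℕ) : BInf := ((List.range (a - 1)).map fun t => β (t + 1) 1).prod

/-- The copy of the braid group `B_n` inside `B_∞`: the subgroup generated by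
`σ_1, …, σ_{n-1}`. -/
def BSub (n : ℕ) : Subgroup BInf := Subgroup.closure {g | ∃ i, 1 ≤ i ∧ i < n ∧ g = σ i}

lemma shift_σ (s : ℕ) {i : ℕ} (hi : 1 ≤ i) : shift s (σ i) = σ (i + s) := by
  rw [σ, σ, shift, PresentedGroup.toGroup.of]
  congr 1
  omega

lemma shift_shift (a b : ℕ) (x : BInf) : shift a (shift b x) = shift (b + a) x := by
  have : (shift a).comp (shift b) = shift (b + a) := PresentedGroup.ext fun i => by
    simp only [MonoidHom.comp_apply, shift, PresentedGroup.toGroup.of, add_assoc]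
  exact DFunLike.congr_fun this x

lemma σ_commute_shift {i s : ℕ} (hi : 1 ≤ i) (h : i + 1 ≤ s) (x : BInf) :
    Commute (σ i) (shift s x) := by
  have : (MulAut.conj (σ i)).toMonoidHom.comp (shift s) = shift s := PresentedGroup.ext fun t => by
    simp only [MonoidHom.comp_apply, MulEquiv.coe_toMonoidHom, MulAut.conj_apply, shift,
      PresentedGroup.toGroup.of, mul_inv_eq_iff_eq_mul]
    exact gen_comm (by omega)
  exact mul_inv_eq_iff_eq_mul.mp (DFunLike.congr_fun this x)

lemma asc_add (i a b : ℕ) : asc i (a + b) = asc i a * asc (i + a) b := by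
  simp only [asc, List.range_add, List.map_append, List.prod_append, List.map_map,
    Function.comp_def, add_assoc]

lemma shift_asc (s : ℕ) {i : ℕ} (hi : 1 ≤ i) (l : ℕ) : shift s (asc i l) = asc (i + s) l := by
  simp only [asc, map_list_prod, List.map_map, Function.comp_def]
  congr 1
  refine List.map_congr_left fun t _ => ?_
  rw [shift_σ s (by omega)]
  congr 1
  omega

lemma asc_commute_shift {i l s : ℕ} (hi : 1 ≤ i) (h : i + l ≤ s) (x : BInf) :
    Commute (asc i l) (shift s x) :=
  Commute.list_prod_left _ _ fun y hy => by
    obtain ⟨t, ht, rfl⟩ := List.mem_map.mp hy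
    exact σ_commute_shift (by omega) (by rw [List.mem_range] at ht; omega) x

lemma β_commute_shift {k m s : ℕ} (h : k + m ≤ s) (x : BInf) : Commute (β k m) (shift s x) :=
  Commute.list_prod_left _ _ fun y hy => by
    obtain ⟨r, hr, rfl⟩ := List.mem_map.mp hy
    rw [List.mem_range] at hr
    exact asc_commute_shift (by omega) (by omega) x

@[simp]
lemma β_zero (l : ℕ) : β 0 l = 1 := rfl

lemma β_succ (k l : ℕ) : β (k + 1) l = asc (k + 1) l * β k l := by
  simp only [β, List.range_succ_eq_map, List.map_cons, List.prod_cons, List.map_map,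
    Function.comp_def, Nat.sub_zero, Nat.succ_eq_add_one, Nat.add_sub_add_right]

lemma β_add_right (n m l : ℕ) : β n (m + l) = β n m * shift m (β n l) := by
  induction n with
  | zero => simp
  | succ n ih =>
    have hc : Commute (β n m) (asc (n + 1 + m) l) := by
      have := β_commute_shift (le_refl (n + m)) (asc 1 l)
      rwa [shift_asc _ le_rfl, show 1 + (n + m) = n + 1 + m by omega] at this
    rw [β_succ, β_succ, β_succ n l, asc_add, ih, map_mul, shift_asc _ (by omega), mul_assoc,
      mul_assoc, hc.left_comm]

lemma β_add_left (j n m : ℕ) : β (j + n) m = shift j (β n m) * β j m := by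
  induction n with
  | zero => simp
  | succ n ih =>
    rw [← add_assoc, β_succ, ih, β_succ, map_mul, shift_asc _ (by omega), mul_assoc,
      show n + 1 + j = j + n + 1 by omega]

/-- `β_{n,m+l}^{↑j} · β_{j,m} = β_{j+n,m} · β_{n,l}^{↑(m+j)}` in `B_∞`. -/
theorem beta_exchange' (n m l j : ℕ) :
    shift j (β n (m + l)) * β j m = β (j + n) m * shift (m + j) (β n l) := by
  rw [β_add_right, map_mul, shift_shift, β_add_left, mul_assoc, mul_assoc,
    (β_commute_shift (s := m + j) (by omega) (β n l)).eq]

end BraidPaper
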